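/- Define f : ℓ² → ℝ by f(x) := dist(x, F), where F := ℓ² \ ⋃_{n≥2} B(pₙ, 1/(2n)) and pₙ := (1/n)(e₁ + eₙ) with (eₙ) the canonical basis of ℓ². Then f is Lipschitz with constant 1, f is Gâteaux differentiable at 0 with Gâteaux derivative 0, f is Fréchet differentiable at 0 along the hyperplane {x ∈ ℓ² : x₁ = 0}, but f is not Fréchet differentiable at 0. -/

import Mathlib

/-!
A point outside `F` lies in some ball `B(pₙ, 1/(2n))`, so its first coordinate is about
`1/n` and its `n`-th coordinate exceeds a third of the first. On a line `t ↦ t • u` with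
`u₁ ≠ 0` this forces `n → ∞` as `t → 0` while `3|uₙ| > |u₁|`, which is impossible because
`uₙ → 0`; so `f` vanishes near `0` on every line, and on the whole hyperplane `x₁ = 0`.
A Fréchet derivative at `0` would then be `0`, but `f (pₙ) ≥ 1/(2n)` while `‖pₙ‖ ≤ 2/n`
and `pₙ → 0`.
-/

open Metric Set Topology

/-- The space `ℓ²`. -/
noncomputable abbrev Ell2 : Type := lp (fun _ : ℕ => ℝ) 2

/-- The canonical basis vectors of `ℓ²`. -/
noncomputable def e (n : ℕ) : Ell2 := lp.single 2 n (1 : ℝ)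

/-- The points `pₙ := (1/n)(e₁ + eₙ)`. -/
noncomputable def p (n : ℕ) : Ell2 := (1 / (n : ℝ)) • (e 1 + e n)

/-- `F := ℓ² \ ⋃_{n ≥ 2} B(pₙ, 1/(2n))`. -/
noncomputable def F : Set Ell2 :=
  (⋃ n ∈ {n : ℕ | 2 ≤ n}, Metric.ball (p n) (1 / (2 * (n : ℝ))))ᶜ

/-- `f x := dist(x, F)`. -/
noncomputable def f (x : Ell2) : ℝ := Metric.infDist x F

/-- The coordinate functional `x ↦ x 1` on `ℓ²`. -/
noncomputable def coord1 : Ell2 →ₗ[ℝ] ℝ where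
  toFun x := x 1
  map_add' a b := by simp [lp.coeFn_add]
  map_smul' c x := by simp [lp.coeFn_smul]

/-- The hyperplane `{x ∈ ℓ² : x₁ = 0}`. -/
noncomputable def V : Submodule ℝ Ell2 := LinearMap.ker coord1

open Filter

theorem Memℓp.tendsto_norm_cofinite_zero {α : Type*} {E : α → Type*}
    [∀ i, NormedAddCommGroup (E i)] {q : ENNReal} {x : ∀ i, E i} (hx : Memℓp x q)
    (hq : 0 < q.toReal) : Tendsto (fun i => ‖x i‖) cofinite (𝓝 0) := by
  have h := ((hx.summable hq).tendsto_cofinite_zero).rpow_const (p := q.toReal⁻¹)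
    (Or.inr (inv_nonneg.2 hq.le))
  rw [Real.zero_rpow (inv_ne_zero hq.ne')] at h
  refine h.congr fun i => ?_
  exact Real.rpow_rpow_inv (norm_nonneg _) hq.ne'

theorem lp.norm_sub_apply_le_dist {α : Type*} {E : α → Type*} [∀ i, NormedAddCommGroup (E i)]
    {q : ENNReal} [Fact (1 ≤ q)] (x y : lp E q) (i : α) : ‖x i - y i‖ ≤ dist x y := by
  simpa [dist_eq_norm] using lp.norm_apply_le_norm (zero_lt_one.trans_le Fact.out).ne' (x - y) i

theorem HasFDerivAt.eq_zero_of_hasDerivAt_smul {𝕜 E G : Type*} [NontriviallyNormedField 𝕜]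
    [NormedAddCommGroup E] [NormedSpace 𝕜 E] [NormedAddCommGroup G] [NormedSpace 𝕜 G]
    {g : E → G} {L : E →L[𝕜] G} (hL : HasFDerivAt g L 0)
    (h : ∀ u : E, HasDerivAt (fun t : 𝕜 => g (t • u)) 0 0) : L = 0 := by
  ext u
  refine (hL.hasLineDerivAt u).unique ?_
  simpa [HasLineDerivAt] using h u

theorem not_hasFDerivAt_zero_of_frequently_lt {E ι : Type*} [NormedAddCommGroup E]
    [NormedSpace ℝ E] {g : E → ℝ} {l : Filter ι} {x : ι → E} {c : ℝ} (hc : 0 < c)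
    (hx : Tendsto x l (𝓝 0)) (h : ∃ᶠ i in l, c * ‖x i‖ < |g (x i) - g 0|) :
    ¬ HasFDerivAt g (0 : E →L[ℝ] ℝ) 0 := by
  intro hg
  have hsmall := (hasFDerivAt_iff_isLittleO_nhds_zero.1 hg).def hc
  obtain ⟨i, hlt, hle⟩ := (h.and_eventually (hx.eventually hsmall)).exists
  simp only [zero_add, zero_apply, sub_zero, Real.norm_eq_abs] at hle
  exact hle.not_gt hlt

theorem e_apply (n k : ℕ) : e n k = if k = n then 1 else 0 := by
  simp [e, lp.single_apply, Pi.single_apply]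

theorem p_apply_one {n : ℕ} (hn : 2 ≤ n) : p n 1 = 1 / n := by
  change 1 / (n : ℝ) * (e 1 1 + e n 1) = 1 / n
  simp [e_apply, show 1 ≠ n by omega]

theorem p_apply_self {n : ℕ} (hn : 2 ≤ n) : p n n = 1 / n := by
  change 1 / (n : ℝ) * (e 1 n + e n n) = 1 / n
  simp [e_apply, show n ≠ 1 by omega]

theorem norm_p_le (n : ℕ) : ‖p n‖ ≤ 2 / n := by
  have he : ∀ k, ‖e k‖ = 1 := fun k => by simp [e, lp.norm_single]
  calc ‖p n‖ ≤ 1 / n * (‖e 1‖ + ‖e n‖) := by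
        rw [p, norm_smul, Real.norm_of_nonneg (by positivity)]
        gcongr
        exact norm_add_le _ _
    _ = 2 / n := by rw [he, he]; ring

theorem tendsto_p_atTop : Tendsto p atTop (𝓝 0) :=
  squeeze_zero_norm norm_p_le (tendsto_const_div_atTop_nhds_zero_nat 2)

theorem mem_F_iff {x : Ell2} : x ∈ F ↔ ∀ n : ℕ, 2 ≤ n → 1 / (2 * n) ≤ dist x (p n) := by
  simp [F]

theorem exists_of_notMem_F {x : Ell2} (hx : x ∉ F) :
    ∃ n : ℕ, 2 ≤ n ∧ 1 / (2 * n) < x 1 ∧ x 1 < 3 * x n := by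
  simp only [mem_F_iff, not_forall, not_le] at hx
  obtain ⟨n, hn, hdist⟩ := hx
  have h1 := abs_lt.1 ((lp.norm_sub_apply_le_dist x (p n) 1).trans_lt hdist)
  have hn' := abs_lt.1 ((lp.norm_sub_apply_le_dist x (p n) n).trans_lt hdist)
  rw [p_apply_one hn] at h1
  rw [p_apply_self hn] at hn'
  have half : 1 / (2 * (n : ℝ)) = 1 / n / 2 := by ring
  refine ⟨n, hn, ?_, ?_⟩ <;> linarith

theorem mem_F_of_apply_one_eq_zero {x : Ell2} (hx : x 1 = 0) : x ∈ F := by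
  by_contra h
  obtain ⟨n, hn, hpos, -⟩ := exists_of_notMem_F h
  have hn0 : (0 : ℝ) < n := Nat.cast_pos.2 (by omega)
  rw [hx] at hpos
  exact (one_div_pos.2 (by positivity)).not_gt hpos

theorem smul_mem_F {u : Ell2} {t : ℝ} {N : ℕ} (hN : ∀ n ≥ N, 3 * |u n| < |u 1|)
    (ht : t * u 1 < 1 / (2 * (N + 1))) : t • u ∈ F := by
  by_contra h
  obtain ⟨n, hn, hlow, hhigh⟩ := exists_of_notMem_F h
  simp only [lp.coeFn_smul, Pi.smul_apply, smul_eq_mul] at hlow hhigh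
  have hn0 : (0 : ℝ) < n := Nat.cast_pos.2 (by omega)
  have hNn : N ≤ n := by
    have : 1 / (2 * (n : ℝ)) < 1 / (2 * (N + 1)) := hlow.trans ht
    rw [one_div_lt_one_div (by positivity) (by positivity)] at this
    exact_mod_cast (by linarith : (N : ℝ) ≤ n)
  have hpos : 0 < t * u 1 := (one_div_pos.2 (by positivity)).trans hlow
  have htpos : 0 < |t| := abs_pos.2 (by rintro rfl; simp at hpos)
  have : |t| * |u 1| < |t| * (3 * |u n|) := by
    rw [← abs_mul, abs_of_pos hpos]
    calc t * u 1 < 3 * (t * u n) := hhigh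
      _ ≤ 3 * |t * u n| := by gcongr; exact le_abs_self _
      _ = |t| * (3 * |u n|) := by rw [abs_mul]; ring
  linarith [mul_lt_mul_of_pos_left (hN n hNn) htpos]

theorem eventually_smul_mem_F (u : Ell2) : ∀ᶠ t in 𝓝 (0 : ℝ), t • u ∈ F := by
  by_cases hu : u 1 = 0
  · exact Eventually.of_forall fun t =>
      mem_F_of_apply_one_eq_zero (by simp [lp.coeFn_smul, hu])
  have hsmall : ∀ᶠ n in atTop, ‖u n‖ < |u 1| / 3 := by
    rw [← Nat.cofinite_eq_atTop]
    exact ((lp.memℓp u).tendsto_norm_cofinite_zero (by norm_num)).eventually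
      (gt_mem_nhds (by positivity))
  obtain ⟨N, hN⟩ := eventually_atTop.1 hsmall
  have ht : Tendsto (fun t : ℝ => t * u 1) (𝓝 0) (𝓝 0) := by
    simpa using (tendsto_id (x := 𝓝 (0 : ℝ))).mul_const (u 1)
  filter_upwards [ht.eventually (gt_mem_nhds (by positivity : (0 : ℝ) < 1 / (2 * (N + 1))))]
    with t htN
  refine smul_mem_F (fun n hn => ?_) htN
  linarith [Real.norm_eq_abs (u n) ▸ hN n hn]

theorem f_hasDerivAt_smul (u : Ell2) : HasDerivAt (fun t : ℝ => f (t • u)) 0 0 :=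
  (hasDerivAt_const (0 : ℝ) (0 : ℝ)).congr_of_eventuallyEq <|
    (eventually_smul_mem_F u).mono fun _ ht => infDist_zero_of_mem ht

theorem one_div_two_mul_le_f_p {n : ℕ} (hn : 2 ≤ n) : 1 / (2 * n) ≤ f (p n) := by
  rw [f, le_infDist ⟨0, mem_F_of_apply_one_eq_zero rfl⟩]
  intro y hy
  rw [dist_comm]
  exact mem_F_iff.1 hy n hn

theorem frequently_norm_p_lt_abs_f_p_sub : ∃ᶠ n in atTop, 1 / 8 * ‖p n‖ < |f (p n) - f 0| := by
  refine (eventually_ge_atTop 2).frequently.mono fun n hn => ?_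
  have hf0 : f 0 = 0 := infDist_zero_of_mem (mem_F_of_apply_one_eq_zero rfl)
  have hn' : (0 : ℝ) < n := by positivity
  calc 1 / 8 * ‖p n‖ ≤ 1 / 8 * (2 / n) := by gcongr; exact norm_p_le n
    _ < 1 / (2 * n) := by field_simp; norm_num
    _ ≤ |f (p n) - f 0| := by
      rw [hf0, sub_zero]
      exact (one_div_two_mul_le_f_p hn).trans (le_abs_self _)

theorem lipschitz_gateaux_hyperplane_not_frechet :
    LipschitzWith 1 f ∧
    (∀ u : Ell2, HasDerivAt (fun t : ℝ => f (t • u)) 0 0) ∧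
    DifferentiableAt ℝ (fun v : V => f ((0 : Ell2) + (v : Ell2))) (0 : V) ∧
    ¬ DifferentiableAt ℝ f 0 := by
  refine ⟨lipschitz_infDist_pt F, f_hasDerivAt_smul, ?_, fun hd => ?_⟩
  · have hV : (fun v : V => f ((0 : Ell2) + (v : Ell2))) = fun _ => 0 := funext fun v =>
      infDist_zero_of_mem (by simpa using mem_F_of_apply_one_eq_zero v.2)
    rw [hV]
    exact differentiableAt_const 0
  · have hf := hd.hasFDerivAt
    rw [hf.eq_zero_of_hasDerivAt_smul f_hasDerivAt_smul] at hf
    exact not_hasFDerivAt_zero_of_frequently_lt (by norm_num) tendsto_p_atTop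
      frequently_norm_p_lt_abs_f_p_sub hf
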